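/- arXiv:2404.08069 — 2 statements merged into one kernel-verified Lean document; each statement's English description precedes it below -/
import Mathlib

section
/- Let n be a positive natural number and σ > 0. Let X be a random vector in ℝ^n whose coordinates are independent Gaussian random variables with mean 0 and variance σ². Then for every ε with 0 < ε ≤ √n, the probability that |‖X‖ − σ√n| ≤ σε is at least 1 − 2·exp(−ε²/16), where ‖·‖ denotes the Euclidean norm. (Equivalently, the product measure ⊗_{i<n} N(0, σ²) of the annulus {x ∈ ℝ^n : σ√n − σε ≤ ‖x‖ ≤ σ√n + σε} is at least 1 − 2·exp(−ε²/16).) -/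
/-!
Chernoff's method applied to `‖X‖² = ∑ Xᵢ²`. For `2tσ² < 1` the one-dimensional Gaussian integral
gives `E exp(t Xᵢ²) = (1 - 2tσ²)^(-1/2)`, so by independence `E exp(t ‖X‖²) = (1 - 2tσ²)^(-n/2)`.
Markov's inequality with `2tσ² = ±ε/(2√n)` and the bounds `-log(1 - c) ≤ c + 2c²`,
`log(1 + c) ≥ c - c²/2` for `0 ≤ c ≤ 1/2` bound the two tails `‖X‖ ≥ σ(√n + ε)` and
`‖X‖ ≤ σ(√n - ε)` by `exp(-ε²/4)` and `exp(-ε²/8)`.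
-/

open MeasureTheory ProbabilityTheory Real
open scoped NNReal ENNReal

lemma exp_mul_sum_sq {ι : Type*} [Fintype ι] (t : ℝ) (x : ι → ℝ) :
    exp (t * ∑ i, x i ^ 2) = ∏ i, exp (t * x i ^ 2) := by
  rw [Finset.mul_sum, exp_sum]

lemma inv_sqrt_pow_eq_exp {x : ℝ} (hx : 0 < x) (n : ℕ) :
    (√x)⁻¹ ^ n = exp (-(n * log x) / 2) := by
  rw [← exp_log (sqrt_pos.2 hx), log_sqrt hx.le, ← exp_neg, ← exp_nat_mul]
  ring_nf

lemma annulus_upper_exponent_le {s ε : ℝ} (hε : 0 < ε) (hεs : ε ≤ s) :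
    -(ε / (2 * s) * (s + ε) ^ 2 + s ^ 2 * log (1 - ε / (2 * s))) / 2 ≤ -ε ^ 2 / 4 := by
  have hs : 0 < s := hε.trans_le hεs
  set c := ε / (2 * s) with hc_def
  have hsc : s * c = ε / 2 := by rw [hc_def]; field_simp
  have hc0 : 0 < c := by positivity
  have hc1 : c ≤ 1 / 2 := by rw [hc_def, div_le_iff₀ (by positivity)]; linarith
  have hlog : -log (1 - c) ≤ c + 2 * c ^ 2 := by
    have h := one_sub_inv_le_log_of_pos (x := 1 - c) (by linarith)
    have hinv : (1 - c)⁻¹ ≤ 1 + c + 2 * c ^ 2 := by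
      rw [inv_le_iff_one_le_mul₀ (by linarith)]; nlinarith
    linarith
  nlinarith [mul_le_mul_of_nonneg_left hlog (sq_nonneg s), mul_pos hc0 (sq_pos_of_pos hε)]

lemma annulus_lower_exponent_le {s ε : ℝ} (hε : 0 < ε) (hεs : ε ≤ s) :
    (ε / (2 * s) * (s - ε) ^ 2 - s ^ 2 * log (1 + ε / (2 * s))) / 2 ≤ -ε ^ 2 / 8 := by
  have hs : 0 < s := hε.trans_le hεs
  set c := ε / (2 * s) with hc_def
  have hsc : s * c = ε / 2 := by rw [hc_def]; field_simp
  have hc0 : 0 < c := by positivity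
  have hc1 : c ≤ 1 / 2 := by rw [hc_def, div_le_iff₀ (by positivity)]; linarith
  have hlog : c - c ^ 2 / 2 ≤ log (1 + c) := by
    refine le_trans ?_ (le_log_one_add_of_nonneg hc0.le)
    rw [le_div_iff₀ (by linarith)]; nlinarith [pow_pos hc0 3]
  nlinarith [mul_le_mul_of_nonneg_left hlog (sq_nonneg s), mul_pos hc0 (sq_pos_of_pos hε)]

namespace ProbabilityTheory

variable {v : ℝ≥0} {t : ℝ}

lemma gaussianPDFReal_zero_mul_exp_mul_sq (hv : v ≠ 0) (x : ℝ) :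
    gaussianPDFReal 0 v x * exp (t * x ^ 2)
      = (√(2 * π * v))⁻¹ * exp (-((1 - 2 * t * v) / (2 * v)) * x ^ 2) := by
  rw [gaussianPDFReal_def, mul_assoc, ← exp_add]
  have : (v : ℝ) ≠ 0 := by exact_mod_cast hv
  congr 2
  field_simp
  ring

lemma integrable_exp_mul_sq_gaussianReal (ht : 2 * t * v < 1) :
    Integrable (fun x => exp (t * x ^ 2)) (gaussianReal 0 v) := by
  rcases eq_or_ne v 0 with rfl | hv
  · simpa using integrable_dirac (by simp)
  have hv' : (0 : ℝ) < v := NNReal.coe_pos.2 (pos_iff_ne_zero.2 hv)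
  rw [gaussianReal_of_var_ne_zero _ hv, integrable_withDensity_iff_integrable_smul'
    (measurable_gaussianPDF _ _) (ae_of_all _ fun _ ↦ gaussianPDF_lt_top)]
  simp_rw [toReal_gaussianPDF, smul_eq_mul, gaussianPDFReal_zero_mul_exp_mul_sq hv]
  exact (integrable_exp_neg_mul_sq (by positivity)).const_mul _

lemma integral_exp_mul_sq_gaussianReal (ht : 2 * t * v < 1) :
    ∫ x, exp (t * x ^ 2) ∂gaussianReal 0 v = (√(1 - 2 * t * v))⁻¹ := by
  rcases eq_or_ne v 0 with rfl | hv
  · simp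
  have hv' : (0 : ℝ) < v := NNReal.coe_pos.2 (pos_iff_ne_zero.2 hv)
  have ht' : 0 < 1 - 2 * t * v := by linarith
  simp_rw [integral_gaussianReal_eq_integral_smul hv, smul_eq_mul,
    gaussianPDFReal_zero_mul_exp_mul_sq hv, integral_const_mul, integral_gaussian,
    div_div_eq_mul_div, sqrt_div' _ ht'.le]
  field_simp

variable {ι : Type*} [Fintype ι]

lemma integrable_exp_mul_sum_sq_pi_gaussianReal (ht : 2 * t * v < 1) :
    Integrable (fun x : ι → ℝ => exp (t * ∑ i, x i ^ 2))
      (Measure.pi fun _ => gaussianReal 0 v) := by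
  simp_rw [exp_mul_sum_sq t]
  exact .fintype_prod fun _ => integrable_exp_mul_sq_gaussianReal ht

lemma mgf_sum_sq_pi_gaussianReal (ht : 2 * t * v < 1) :
    mgf (fun x : ι → ℝ => ∑ i, x i ^ 2) (Measure.pi fun _ => gaussianReal 0 v) t
      = (√(1 - 2 * t * v))⁻¹ ^ Fintype.card ι := by
  simp_rw [mgf, exp_mul_sum_sq, integral_fintype_prod_eq_pow (fun y => exp (t * y ^ 2)),
    integral_exp_mul_sq_gaussianReal ht]

lemma measureReal_sum_sq_ge_le_exp (hv : v ≠ 0) {c : ℝ} (hc0 : 0 ≤ c) (hc1 : c < 1) (b : ℝ) :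
    (Measure.pi fun _ : ι => gaussianReal 0 v).real {x | v * b ≤ ∑ i, x i ^ 2}
      ≤ exp (-(c * b + Fintype.card ι * log (1 - c)) / 2) := by
  have hv' : (0 : ℝ) < v := NNReal.coe_pos.2 (pos_iff_ne_zero.2 hv)
  have hcv : 2 * (c / (2 * v)) * v = c := by field_simp
  have hchernoff := measure_ge_le_exp_mul_mgf (v * b) (by positivity : 0 ≤ c / (2 * v))
    (integrable_exp_mul_sum_sq_pi_gaussianReal (ι := ι) (hcv.trans_lt hc1))
  rw [mgf_sum_sq_pi_gaussianReal (hcv.trans_lt hc1), hcv,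
    inv_sqrt_pow_eq_exp (by linarith), ← exp_add] at hchernoff
  convert hchernoff using 2
  field_simp
  ring

lemma measureReal_sum_sq_le_le_exp (hv : v ≠ 0) {c : ℝ} (hc0 : 0 ≤ c) (b : ℝ) :
    (Measure.pi fun _ : ι => gaussianReal 0 v).real {x | ∑ i, x i ^ 2 ≤ v * b}
      ≤ exp ((c * b - Fintype.card ι * log (1 + c)) / 2) := by
  have hv' : (0 : ℝ) < v := NNReal.coe_pos.2 (pos_iff_ne_zero.2 hv)
  have hcv : 2 * (-c / (2 * v)) * v = -c := by field_simp
  have hc1 : 2 * (-c / (2 * v)) * v < 1 := by linarith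
  have hchernoff := measure_le_le_exp_mul_mgf (v * b)
    (div_nonpos_of_nonpos_of_nonneg (neg_nonpos.2 hc0) (by positivity) : -c / (2 * v) ≤ 0)
    (integrable_exp_mul_sum_sq_pi_gaussianReal (ι := ι) hc1)
  rw [mgf_sum_sq_pi_gaussianReal hc1, hcv, sub_neg_eq_add,
    inv_sqrt_pow_eq_exp (by linarith), ← exp_add] at hchernoff
  convert hchernoff using 2
  field_simp
  ring

lemma measureReal_sum_sq_ge_le_exp_neg_sq (hv : v ≠ 0) {s ε : ℝ}
    (hcard : (Fintype.card ι : ℝ) = s ^ 2) (hε : 0 < ε) (hεs : ε ≤ s) :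
    (Measure.pi fun _ : ι => gaussianReal 0 v).real {x | v * (s + ε) ^ 2 ≤ ∑ i, x i ^ 2}
      ≤ exp (-ε ^ 2 / 4) := by
  have hs : 0 < s := hε.trans_le hεs
  have hc1 : ε / (2 * s) < 1 := by rw [div_lt_one (by positivity)]; linarith
  refine (measureReal_sum_sq_ge_le_exp hv (by positivity) hc1 _).trans ?_
  rw [hcard]
  exact exp_le_exp.2 (annulus_upper_exponent_le hε hεs)

lemma measureReal_sum_sq_le_le_exp_neg_sq (hv : v ≠ 0) {s ε : ℝ}
    (hcard : (Fintype.card ι : ℝ) = s ^ 2) (hε : 0 < ε) (hεs : ε ≤ s) :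
    (Measure.pi fun _ : ι => gaussianReal 0 v).real {x | ∑ i, x i ^ 2 ≤ v * (s - ε) ^ 2}
      ≤ exp (-ε ^ 2 / 8) := by
  have hs : 0 < s := hε.trans_le hεs
  refine (measureReal_sum_sq_le_le_exp hv (c := ε / (2 * s)) (by positivity) _).trans ?_
  rw [hcard]
  exact exp_le_exp.2 (annulus_lower_exponent_le hε hεs)

end ProbabilityTheory

lemma compl_preimage_annulus_subset {ι : Type*} [Fintype ι] {σ a r : ℝ} (hσ : 0 ≤ σ)
    (har : 0 ≤ a + r) :
    (WithLp.toLp 2 ⁻¹' {x : EuclideanSpace ℝ ι | |‖x‖ - σ * a| ≤ σ * r})ᶜ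
      ⊆ {x | σ ^ 2 * (a + r) ^ 2 ≤ ∑ i, x i ^ 2} ∪ {x | ∑ i, x i ^ 2 ≤ σ ^ 2 * (a - r) ^ 2} := by
  intro x hx
  have hx : σ * r < |‖WithLp.toLp 2 x‖ - σ * a| := not_le.1 hx
  simp only [Set.mem_union, Set.mem_ofPred_eq, ← EuclideanSpace.real_norm_sq_eq, ← mul_pow]
  rcases lt_abs.1 hx with h | h
  · exact .inl (pow_le_pow_left₀ (by positivity) (by linarith) 2)
  · exact .inr (pow_le_pow_left₀ (norm_nonneg _) (by linarith) 2)

lemma MeasureTheory.ofReal_one_sub_le_of_measureReal_compl_le {Ω : Type*} [MeasurableSpace Ω]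
    {μ : Measure Ω} [IsProbabilityMeasure μ] {s : Set Ω} (hs : MeasurableSet s) {δ : ℝ}
    (h : μ.real sᶜ ≤ δ) : ENNReal.ofReal (1 - δ) ≤ μ s := by
  rw [ENNReal.ofReal_le_iff_le_toReal (measure_ne_top μ s), ← measureReal_def]
  linarith [probReal_compl_eq_one_sub (μ := μ) hs]

theorem gaussian_annulus_general (n : ℕ) (σ : ℝ) (hσ : 0 < σ)
    (ε : ℝ) (hε : 0 < ε) (hε' : ε ≤ Real.sqrt n) :
    ENNReal.ofReal (1 - 2 * Real.exp (-ε ^ 2 / 16)) ≤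
      (Measure.pi fun _ : Fin n => gaussianReal 0 ⟨σ ^ 2, sq_nonneg σ⟩)
        (WithLp.toLp 2 ⁻¹' {x : EuclideanSpace ℝ (Fin n) | |‖x‖ - σ * Real.sqrt n| ≤ σ * ε}) := by
  have hv : (⟨σ ^ 2, sq_nonneg σ⟩ : ℝ≥0) ≠ 0 := fun h => (pow_pos hσ 2).ne' (congrArg Subtype.val h)
  have hcard : (Fintype.card (Fin n) : ℝ) = √(n : ℝ) ^ 2 := by simp
  -- instance search does not unify `gaussianReal 0 ⟨σ ^ 2, _⟩` with the generic instance
  have := fun _ : Fin n => instIsProbabilityMeasureGaussianReal 0 ⟨σ ^ 2, sq_nonneg σ⟩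
  refine ofReal_one_sub_le_of_measureReal_compl_le (by measurability) ?_
  calc _ ≤ _ := (measureReal_mono (compl_preimage_annulus_subset hσ.le
          (by positivity : 0 ≤ √(n : ℝ) + ε))).trans (measureReal_union_le _ _)
    _ ≤ exp (-ε ^ 2 / 4) + exp (-ε ^ 2 / 8) :=
      add_le_add (measureReal_sum_sq_ge_le_exp_neg_sq hv hcard hε hε')
        (measureReal_sum_sq_le_le_exp_neg_sq hv hcard hε hε')
    _ ≤ 2 * exp (-ε ^ 2 / 16) := by
      have h4 := exp_le_exp.2 (by linarith [sq_nonneg ε] : -ε ^ 2 / 4 ≤ -ε ^ 2 / 16)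
      have h8 := exp_le_exp.2 (by linarith [sq_nonneg ε] : -ε ^ 2 / 8 ≤ -ε ^ 2 / 16)
      linarith

/-- **Scaled Gaussian Annulus Theorem.** If `X ∼ N(0, σ²I)` on `ℝ^n` (the product of
one-dimensional Gaussians of mean `0` and variance `σ²`), then for `0 < ε ≤ √n`, the
probability that `|‖X‖ - σ√n| ≤ σε` is at least `1 - 2 exp(-ε²/16)`. -/
theorem gaussian_annulus (n : ℕ) (hn : 0 < n) (σ : ℝ) (hσ : 0 < σ)
    (ε : ℝ) (hε : 0 < ε) (hε' : ε ≤ Real.sqrt n) :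
    ENNReal.ofReal (1 - 2 * Real.exp (-ε ^ 2 / 16)) ≤
      (Measure.pi fun _ : Fin n => gaussianReal 0 ⟨σ ^ 2, sq_nonneg σ⟩)
        (WithLp.toLp 2 ⁻¹' {x : EuclideanSpace ℝ (Fin n) | |‖x‖ - σ * Real.sqrt n| ≤ σ * ε}) :=
  gaussian_annulus_general n σ hσ ε hε hε'
end

section
/- Let n be a positive natural number, r > 0, and let Y be a random vector drawn from the uniform probability distribution on the closed Euclidean ball B_r(0) ⊆ ℝ^n of radius r centered at the origin. Then for every δ with 0 < δ < r, the probability that |‖Y‖ − r| ≤ δ is at least 1 − exp(−δn/r). -/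
open MeasureTheory

/-- **Concentration for the uniform measure on a ball.** If `Y` is drawn from the uniform
probability distribution on the closed Euclidean ball of radius `r > 0` centered at the
origin in `ℝ^n` (Lebesgue measure restricted to the ball and normalized), then for
`0 < δ < r`, the probability that `|‖Y‖ - r| ≤ δ` is at least `1 - exp(-δ n / r)`. -/
theorem uniform_ball_concentration (n : ℕ) (hn : 0 < n) (r : ℝ) (hr : 0 < r)
    (δ : ℝ) (hδ : 0 < δ) (hδr : δ < r) :
    ENNReal.ofReal (1 - Real.exp (-(δ * n) / r)) ≤
      ((volume (Metric.closedBall (0 : EuclideanSpace ℝ (Fin n)) r))⁻¹ •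
          volume.restrict (Metric.closedBall (0 : EuclideanSpace ℝ (Fin n)) r))
        {y : EuclideanSpace ℝ (Fin n) | |‖y‖ - r| ≤ δ} := by
  set E := EuclideanSpace ℝ (Fin n)
  set B := Metric.closedBall (0 : E) r with hB
  set S : Set E := {y | |‖y‖ - r| ≤ δ} with hS
  have hSm : MeasurableSet S := by
    have : S = (fun y : E => |‖y‖ - r|) ⁻¹' Set.Iic δ := rfl
    rw [this]
    exact (((continuous_norm.sub continuous_const).abs).measurable) measurableSet_Iic
  have happ : ((volume B)⁻¹ • volume.restrict B) S = (volume B)⁻¹ * volume (S ∩ B) := by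
    rw [Measure.smul_apply, Measure.restrict_apply hSm]; rfl
  rw [happ]
  -- unit ball constant
  set C := volume (Metric.ball (0 : E) 1) with hC
  have hfin : Module.finrank ℝ E = n := finrank_euclideanSpace_fin
  have hVB : volume B = ENNReal.ofReal (r ^ n) * C := by
    rw [hB, Measure.addHaar_closedBall _ _ hr.le, hfin]
  have hW : volume (Metric.closedBall (0 : E) (r - δ)) = ENNReal.ofReal ((r - δ) ^ n) * C := by
    rw [Measure.addHaar_closedBall _ _ (by linarith), hfin]
  have hCpos : 0 < C := Metric.measure_ball_pos _ _ one_pos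
  have hCfin : C ≠ ⊤ := measure_ball_lt_top.ne
  have hVpos : volume B ≠ 0 := by
    rw [hVB]
    exact mul_ne_zero (by simp [ENNReal.ofReal_eq_zero, not_le, pow_pos hr]) hCpos.ne'
  have hVfin : volume B ≠ ⊤ := by
    rw [hVB]; exact ENNReal.mul_ne_top ENNReal.ofReal_ne_top hCfin
  -- lower bound the set
  have hsub : B \ Metric.ball (0 : E) (r - δ) ⊆ S ∩ B := by
    rintro y ⟨hyB, hyb⟩
    have h1 : ‖y‖ ≤ r := by simpa [hB, Metric.mem_closedBall, dist_zero_right] using hyB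
    have h2 : r - δ ≤ ‖y‖ := by
      simpa [Metric.mem_ball, dist_zero_right, not_lt] using hyb
    refine ⟨?_, hyB⟩
    simp only [hS, Set.mem_setOf_eq, abs_le]
    constructor <;> linarith
  have hlb : volume B - ENNReal.ofReal ((r - δ) ^ n) * C ≤ volume (S ∩ B) := by
    calc volume B - ENNReal.ofReal ((r - δ) ^ n) * C
        ≤ volume B - volume (Metric.ball (0 : E) (r - δ)) := by
          apply tsub_le_tsub_left
          rw [← hW]
          exact measure_mono Metric.ball_subset_closedBall
      _ ≤ volume (B \ Metric.ball (0 : E) (r - δ)) := le_measure_diff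
      _ ≤ volume (S ∩ B) := measure_mono hsub
  -- reduce to real inequality
  have hn' : (0:ℝ) < n := Nat.cast_pos.mpr hn
  have he : Real.exp (-(δ * n) / r) < 1 := by
    apply Real.exp_lt_one_iff.mpr
    apply div_neg_of_neg_of_pos _ hr
    nlinarith
  have hbase : 0 ≤ 1 - δ / r := by
    rw [sub_nonneg, div_le_one hr]; linarith
  have key : (r - δ) ^ n ≤ Real.exp (-(δ * n) / r) * r ^ n := by
    have h1 : r - δ = (1 - δ / r) * r := by field_simp
    have h2 : 1 - δ / r ≤ Real.exp (-(δ / r)) := by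
      have := Real.add_one_le_exp (-(δ / r)); linarith
    calc (r - δ) ^ n = (1 - δ / r) ^ n * r ^ n := by rw [h1, mul_pow]
      _ ≤ Real.exp (-(δ / r)) ^ n * r ^ n := by
          exact mul_le_mul_of_nonneg_right (pow_le_pow_left₀ hbase h2 n)
            (pow_nonneg hr.le n)
      _ = Real.exp (-(δ * n) / r) * r ^ n := by
          rw [← Real.exp_nat_mul]
          congr 1
          ring
  have hreal : (1 - Real.exp (-(δ * n) / r)) * r ^ n ≤ r ^ n - (r - δ) ^ n := by
    nlinarith
  rw [← ENNReal.div_eq_inv_mul, ENNReal.le_div_iff_mul_le (Or.inl hVpos) (Or.inl hVfin)]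
  refine le_trans ?_ hlb
  rw [hVB, ← mul_assoc, ← ENNReal.ofReal_mul (by linarith),
    ← ENNReal.sub_mul (fun _ _ => hCfin),
    ← ENNReal.ofReal_sub _ (pow_nonneg (by linarith) n)]
  exact mul_le_mul_left (ENNReal.ofReal_le_ofReal hreal) C
end
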